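/- arXiv:2405.09434 — 5 statements merged into one kernel-verified Lean document; each statement's English description precedes it below -/
import Mathlib

section
/- Let Γ = ⟨σ₁, …, σₙ⟩ be a group in which the subgroup ⟨σ₁, …, σ_{n-1}⟩ satisfies the rotation relations, and define τᵢ = σ₁σ₂⋯σᵢ for 1 ≤ i ≤ n. Then the set of relations {σₙ^{pₙ} = 1, (σᵢ⋯σₙ)² = 1 for 1 ≤ i ≤ n-1} holds if and only if the set of relations {(τ_{n-1}⁻¹τₙ)^{pₙ} = 1, τₙ² = 1, (τᵢ⁻¹τₙ)² = 1 for 1 ≤ i ≤ n-2} holds. -/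
/-! Since `τᵢ⁻¹ τₙ = σᵢ₊₁ ⋯ σₙ`, the second list of relations is the first one reindexed:
`τ_{n-1}⁻¹ τₙ = σₙ`, `τₙ = σ₁ ⋯ σₙ`, and `(τᵢ⁻¹ τₙ)² = 1` for `i ≤ n - 2` is `(σᵢ₊₁ ⋯ σₙ)² = 1`. -/

/-- The ordered product `σ i * σ (i+1) * ⋯ * σ j`. -/
def sprod {G : Type*} [Group G] (σ : ℕ → G) (i j : ℕ) : G :=
  ((List.range (j + 1 - i)).map (fun k => σ (i + k))).prod

section sprod

variable {G : Type*} [Group G] (σ : ℕ → G)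

lemma sprod_eq_prod_range' (i j : ℕ) :
    sprod σ i j = ((List.range' i (j + 1 - i)).map σ).prod := by
  rw [sprod, List.range'_eq_map_range, List.map_map]
  rfl

lemma sprod_self (i : ℕ) : sprod σ i i = σ i := by
  simp [sprod_eq_prod_range']

lemma sprod_mul_sprod {i j m : ℕ} (hij : i ≤ j + 1) (hjm : j ≤ m) :
    sprod σ i j * sprod σ (j + 1) m = sprod σ i m := by
  rw [sprod_eq_prod_range', sprod_eq_prod_range', sprod_eq_prod_range', ← List.prod_append,
    ← List.map_append, show m + 1 - i = (j + 1 - i) + (m + 1 - (j + 1)) by omega,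
    ← List.range'_append_1, Nat.add_sub_cancel' hij]

lemma sprod_inv_mul_sprod {a i m : ℕ} (hai : a ≤ i + 1) (him : i ≤ m) :
    (sprod σ a i)⁻¹ * sprod σ a m = sprod σ (i + 1) m := by
  rw [inv_mul_eq_iff_eq_mul, sprod_mul_sprod σ hai him]

end sprod

theorem relations_in_terms_of_taus_general {G : Type*} [Group G] (n : ℕ) (hn : 2 ≤ n)
    (σ : ℕ → G) (p : ℕ → ℕ) :
    (σ n ^ p n = 1 ∧ ∀ i, 1 ≤ i → i ≤ n - 1 → (sprod σ i n) ^ 2 = 1) ↔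
    (((sprod σ 1 (n - 1))⁻¹ * sprod σ 1 n) ^ p n = 1 ∧
      (sprod σ 1 n) ^ 2 = 1 ∧
      ∀ i, 1 ≤ i → i ≤ n - 2 → ((sprod σ 1 i)⁻¹ * sprod σ 1 n) ^ 2 = 1) := by
  have hlast : (sprod σ 1 (n - 1))⁻¹ * sprod σ 1 n = σ n := by
    rw [sprod_inv_mul_sprod σ (by omega) (by omega), Nat.sub_add_cancel (by omega), sprod_self]
  rw [hlast]
  constructor
  · rintro ⟨hpow, hsq⟩
    refine ⟨hpow, hsq 1 le_rfl (by omega), fun i hi₁ hi₂ => ?_⟩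
    rw [sprod_inv_mul_sprod σ (by omega) (by omega)]
    exact hsq (i + 1) (by omega) (by omega)
  · rintro ⟨hpow, hτ, hsq⟩
    refine ⟨hpow, fun i hi₁ hi₂ => ?_⟩
    obtain rfl | hi := hi₁.eq_or_lt
    · exact hτ
    obtain ⟨k, rfl⟩ : ∃ k, i = k + 1 := ⟨i - 1, by omega⟩
    rw [← sprod_inv_mul_sprod σ (a := 1) (by omega) (by omega)]
    exact hsq k (by omega) (by omega)

/-- **Corollary 2.4**: with `τᵢ = σ₁⋯σᵢ`, the relations
`σₙ^{pₙ} = 1` and `(σᵢ⋯σₙ)² = 1` (`1 ≤ i ≤ n-1`) are equivalent to the relations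
`(τ_{n-1}⁻¹ τₙ)^{pₙ} = 1`, `τₙ² = 1`, and `(τᵢ⁻¹ τₙ)² = 1` (`1 ≤ i ≤ n-2`),
assuming `⟨σ₁, …, σ_{n-1}⟩` satisfies the rotation relations. -/
theorem relations_in_terms_of_taus {G : Type*} [Group G] (n : ℕ) (hn : 2 ≤ n)
    (σ : ℕ → G) (p : ℕ → ℕ) (hp : ∀ i, 3 ≤ p i)
    (hσp : ∀ i, 1 ≤ i → i ≤ n - 1 → σ i ^ p i = 1)
    (hrel : ∀ i j, 1 ≤ i → i < j → j ≤ n - 1 → (sprod σ i j) ^ 2 = 1) :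
    (σ n ^ p n = 1 ∧ ∀ i, 1 ≤ i → i ≤ n - 1 → (sprod σ i n) ^ 2 = 1) ↔
    (((sprod σ 1 (n - 1))⁻¹ * sprod σ 1 n) ^ p n = 1 ∧
      (sprod σ 1 n) ^ 2 = 1 ∧
      ∀ i, 1 ≤ i → i ≤ n - 2 → ((sprod σ 1 i)⁻¹ * sprod σ 1 n) ^ 2 = 1) :=
  relations_in_terms_of_taus_general n hn σ p
end

section
/- With the monodromy permutations rᵢ on F = Sₙ × {±1}ⁿ × (ℤⁿ/Λ) as defined, we have (r₀r₁)⁴ = id, (r_{n−1}rₙ)⁴ = id, and (rᵢr_{i+1})³ = id for 1 ≤ i ≤ n−2. -/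
/-- The set of flags of the combinatorial cubic toroid `{4,3^{n-2},4}/Λ`:
a flag is a triple `(σ, x, t)` with `σ ∈ Sₙ`, `x ∈ {±1}ⁿ` and `t ∈ ℤⁿ/Λ`. -/
abbrev TFlag (n : ℕ) (Λ : Submodule ℤ (Fin n → ℤ)) :=
  Equiv.Perm (Fin n) × (Fin n → ℤˣ) × ((Fin n → ℤ) ⧸ Λ)

/-- The class in `ℤⁿ/Λ` of the `k`-th standard basis vector. -/
def eQ {n : ℕ} (Λ : Submodule ℤ (Fin n → ℤ)) (k : Fin n) : (Fin n → ℤ) ⧸ Λ :=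
  Submodule.Quotient.mk (Pi.single k 1)

/-- Flip the sign of `x` at position `k`. -/
def flipAt {n : ℕ} (x : Fin n → ℤˣ) (k : Fin n) : Fin n → ℤˣ :=
  Function.update x k (-(x k))

/-- The monodromy generators `r₀, …, rₙ` of the cubic toroid, acting on flags
(indices of positions are `0`-based: position `0` plays the role of `1`, position
`n-1` the role of `n`):
`r₀(σ,x,t) = (σ, x^{(1σ)}, t)`, `rᵢ(σ,x,t) = ((i i+1)σ, x, t)` for `1 ≤ i ≤ n-1`, and
`rₙ(σ,x,t) = (σ, x^{(nσ)}, t − x_{nσ} e_{nσ})`. -/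
noncomputable def rGen {n : ℕ} (Λ : Submodule ℤ (Fin n → ℤ)) (hn : 2 ≤ n) (i : ℕ) :
    TFlag n Λ → TFlag n Λ := fun Φ =>
  if i = 0 then
    (Φ.1, flipAt Φ.2.1 (Φ.1 ⟨0, by omega⟩), Φ.2.2)
  else if h : 1 ≤ i ∧ i ≤ n - 1 then
    (Equiv.swap (⟨i - 1, by omega⟩ : Fin n) ⟨i, by omega⟩ * Φ.1, Φ.2.1, Φ.2.2)
  else if i = n then
    (Φ.1, flipAt Φ.2.1 (Φ.1 ⟨n - 1, by omega⟩),
      Φ.2.2 - ((Φ.2.1 (Φ.1 ⟨n - 1, by omega⟩) : ℤ)) • eQ Λ (Φ.1 ⟨n - 1, by omega⟩))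
  else Φ

/-!
The generators `r₁, …, r_{n-1}` only multiply `σ` on the left by adjacent transpositions, so
`(rᵢ r_{i+1})³` multiplies it by the cube of a 3-cycle. The generators `r₀` and `rₙ` leave `σ`
alone and act on `y = (x, t)` by `ρₖ = flipShift e k` with `k = σ(1)`, resp. `k = σ(n)`, and
translation vectors `e = 0`, resp. `e = eQ Λ`. The `ρₖ` are commuting involutions, so
`(r₀ r₁)²(σ, y) = (σ, ρₐ ρ_b y)` squares to the identity, and likewise for `r_{n-1} rₙ`.
-/

open Function Equiv

section FiberMap

variable {P Y ι : Type*}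

def fiberMap (q : P → ι) (φ : ι → Y → Y) : P × Y → P × Y :=
  fun p => (p.1, φ (q p.1) p.2)

variable {g : P → P} {q : P → ι} {φ : ι → Y → Y}

theorem apply_apply_apply_apply_eq_self (hφ : ∀ i, Involutive (φ i))
    (hcomm : ∀ i j, Function.Commute (φ i) (φ j)) (a b : ι) (y : Y) :
    φ a (φ b (φ a (φ b y))) = y := by
  rw [hcomm b a (φ b y), hφ b, hφ a]

theorem fiberMap_comp_prodMap_iterate_four (hg : Involutive g) (hφ : ∀ i, Involutive (φ i))
    (hcomm : ∀ i j, Function.Commute (φ i) (φ j)) :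
    (fiberMap q φ ∘ Prod.map g id)^[4] = id := by
  funext ⟨σ, y⟩
  simp only [iterate_succ, iterate_zero, comp_apply, fiberMap, Prod.map, id, hg σ]
  rw [apply_apply_apply_apply_eq_self hφ hcomm]

theorem prodMap_comp_fiberMap_iterate_four (hg : Involutive g) (hφ : ∀ i, Involutive (φ i))
    (hcomm : ∀ i j, Function.Commute (φ i) (φ j)) :
    (Prod.map g id ∘ fiberMap q φ)^[4] = id := by
  funext ⟨σ, y⟩
  simp only [iterate_succ, iterate_zero, comp_apply, fiberMap, Prod.map, id, hg σ]
  rw [apply_apply_apply_apply_eq_self hφ hcomm]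

end FiberMap

theorem prodMap_mul_left_comp_iterate {G Y : Type*} [Monoid G] (a b : G) (k : ℕ) :
    (Prod.map (a * ·) (id : Y → Y) ∘ Prod.map (b * ·) id)^[k] = Prod.map ((a * b) ^ k * ·) id := by
  rw [Prod.map_comp_map, comp_mul_left, comp_id, Prod.map_iterate, mul_left_iterate, iterate_id]

theorem swap_mul_swap_pow_three {α : Type*} [Fintype α] [DecidableEq α] {a b c : α}
    (hab : a ≠ b) (hbc : b ≠ c) (hac : a ≠ c) : (swap a b * swap b c) ^ 3 = 1 := by
  rw [swap_comm a b, ← (Perm.isThreeCycle_swap_mul_swap_same hab.symm hbc hac).orderOf]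
  exact pow_orderOf_eq_one _

section Flips

variable {n : ℕ}

theorem flipAt_eq_mul_mulSingle (x : Fin n → ℤˣ) (k : Fin n) :
    flipAt x k = x * Pi.mulSingle k (-1) := by
  funext j
  rcases eq_or_ne j k with rfl | h
  · simp [flipAt]
  · simp [flipAt, h]

theorem flipAt_apply_self (x : Fin n → ℤˣ) (k : Fin n) : flipAt x k k = -x k :=
  update_self _ _ _

theorem flipAt_apply_of_ne (x : Fin n → ℤˣ) {j k : Fin n} (h : j ≠ k) : flipAt x k j = x j :=
  update_of_ne h _ _

theorem flipAt_flipAt_self (x : Fin n → ℤˣ) (k : Fin n) : flipAt (flipAt x k) k = x := by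
  rw [flipAt_eq_mul_mulSingle, flipAt_eq_mul_mulSingle, mul_assoc, ← Pi.mulSingle_mul]
  simp

theorem flipAt_comm (x : Fin n → ℤˣ) (j k : Fin n) :
    flipAt (flipAt x j) k = flipAt (flipAt x k) j := by
  simp only [flipAt_eq_mul_mulSingle, mul_right_comm]

variable {M : Type*} [AddCommGroup M]

def flipShift (e : Fin n → M) (k : Fin n) : (Fin n → ℤˣ) × M → (Fin n → ℤˣ) × M :=
  fun y => (flipAt y.1 k, y.2 - (y.1 k : ℤ) • e k)

theorem flipShift_involutive (e : Fin n → M) (k : Fin n) : Involutive (flipShift e k) := by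
  rintro ⟨x, t⟩
  simp [flipShift, flipAt_flipAt_self, flipAt_apply_self]

theorem flipShift_commute (e : Fin n → M) (j k : Fin n) :
    Function.Commute (flipShift e j) (flipShift e k) := by
  rintro ⟨x, t⟩
  rcases eq_or_ne j k with rfl | h
  · rfl
  · simp only [flipShift, flipAt_comm x j k, flipAt_apply_of_ne _ h, flipAt_apply_of_ne _ h.symm,
      sub_right_comm]

end Flips

section Generators

variable {n : ℕ} (Λ : Submodule ℤ (Fin n → ℤ)) (hn : 2 ≤ n)

theorem rGen_zero : rGen Λ hn 0 = fiberMap (· ⟨0, by omega⟩) (flipShift (0 : Fin n → _ ⧸ Λ)) := by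
  funext Φ
  simp [rGen, fiberMap, flipShift]

theorem rGen_succ (i : ℕ) (hi : i + 1 < n) :
    rGen Λ hn (i + 1) = Prod.map (swap ⟨i, by omega⟩ ⟨i + 1, hi⟩ * ·) id := by
  funext Φ
  simp [rGen, show i + 1 ≤ n - 1 by omega, Prod.map]

theorem rGen_self : rGen Λ hn n = fiberMap (· ⟨n - 1, by omega⟩) (flipShift (eQ Λ)) := by
  funext Φ
  unfold rGen
  rw [if_neg (by omega), dif_neg (by omega), if_pos rfl]
  rfl

end Generators

/-- The monodromy generators of the cubic toroid satisfy the Coxeter-type relations of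
`[4, 3^{n−2}, 4]`: `(r₀r₁)⁴ = id`, `(r_{n−1}rₙ)⁴ = id` and `(rᵢr_{i+1})³ = id` for
`1 ≤ i ≤ n−2`. -/
theorem rGen_coxeter_relations (n : ℕ) (hn : 3 ≤ n)
    (Λ : Submodule ℤ (Fin n → ℤ)) :
    ((rGen Λ (by omega) 0 ∘ rGen Λ (by omega) 1)^[4] = (id : TFlag n Λ → TFlag n Λ)) ∧
    ((rGen Λ (by omega) (n - 1) ∘ rGen Λ (by omega) n)^[4] =
      (id : TFlag n Λ → TFlag n Λ)) ∧
    (∀ i, 1 ≤ i → i ≤ n - 2 →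
      (rGen Λ (by omega) i ∘ rGen Λ (by omega) (i + 1))^[3] =
        (id : TFlag n Λ → TFlag n Λ)) := by
  refine ⟨?_, ?_, ?_⟩
  · rw [rGen_zero, rGen_succ Λ _ 0 (by omega)]
    exact fiberMap_comp_prodMap_iterate_four (swap_mul_involutive _ _)
      (flipShift_involutive _) (flipShift_commute _)
  · rw [show n - 1 = n - 2 + 1 by omega, rGen_succ Λ _ (n - 2) (by omega), rGen_self]
    exact prodMap_comp_fiberMap_iterate_four (swap_mul_involutive _ _)
      (flipShift_involutive _) (flipShift_commute _)
  · intro i hi₁ hi₂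
    obtain ⟨j, rfl⟩ : ∃ j, i = j + 1 := ⟨i - 1, by omega⟩
    rw [rGen_succ Λ _ j (by omega), rGen_succ Λ _ (j + 1) (by omega),
      prodMap_mul_left_comp_iterate, swap_mul_swap_pow_three]
    · simp only [one_mul]
      exact Prod.map_id
    all_goals simp only [ne_eq, Fin.mk.injEq]; omega
end

section
/- Let Φ = (σ, x, t) with x = (x₁,…,xₙ) and t = (t₁,…,tₙ) representing an element of ℤⁿ/Λ with a even and a ≥ 3 (so representatives are well-defined in the relevant range). Then Φ lies in the orbit of the base flag ((1), 𝟙, 0) under the subgroup ⟨r₁, …, rₙ⟩ (flags sharing the base vertex) if and only if each tᵢ ∈ {0, −1} and tᵢ = −1 exactly when xᵢ = −1. -/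
/-- The lattice `Λ_a = aℤⁿ` as a submodule of `ℤⁿ`. -/
def dvdLattice (n a : ℕ) : Submodule ℤ (Fin n → ℤ) where
  carrier := {x | ∀ i, (a : ℤ) ∣ x i}
  add_mem' := by intro p q hp hq i; exact dvd_add (hp i) (hq i)
  zero_mem' := by intro i; simp
  smul_mem' := by intro c x hx i; exact (hx i).mul_left c

/-!
Write `δ(x)` (`signOffset x`) for the vector with entries `0` where `xᵢ = 1` and `-1` where `xᵢ = -1`.
The generators `r₁, …, rₙ₋₁` only permute `σ`, and `rₙ` flips the sign `x_k` at `k = nσ` while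
subtracting `x_k e_k` from `t`, which is exactly the change of `δ(x)`; so `t = δ(x)` is invariant
and holds at the base flag. Conversely the adjacent transpositions generate `Sₙ`, so `σ` can be
chosen freely, and `rₙ` applied after moving any position `k` to `nσ` flips `x_k` from `1` to `-1`:
every sign vector is reached, with `t = δ(x)`.
-/

open Equiv

namespace CubicToroid

variable {n : ℕ} {Λ : Submodule ℤ (Fin n → ℤ)}

def baseFlag (n : ℕ) (Λ : Submodule ℤ (Fin n → ℤ)) : TFlag n Λ :=
  (1, fun _ => 1, 0)

def signOffset (x : Fin n → ℤˣ) : Fin n → ℤ := fun i => if x i = 1 then 0 else -1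

theorem signOffset_one : signOffset (fun _ => (1 : ℤˣ)) = (0 : Fin n → ℤ) := by
  funext i
  simp [signOffset]

theorem signOffset_flipAt (x : Fin n → ℤˣ) (k : Fin n) :
    signOffset (flipAt x k) = signOffset x - (x k : ℤ) • Pi.single k 1 := by
  funext i
  by_cases h : i = k
  · subst h
    rcases Int.units_eq_one_or (x i) with hx | hx <;> simp [signOffset, flipAt, hx]
  · simp [signOffset, flipAt, h]

theorem mk_signOffset_flipAt (x : Fin n → ℤˣ) (k : Fin n) :
    (Submodule.Quotient.mk (signOffset (flipAt x k)) : (Fin n → ℤ) ⧸ Λ) =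
      Submodule.Quotient.mk (signOffset x) - (x k : ℤ) • eQ Λ k := by
  rw [signOffset_flipAt, Submodule.Quotient.mk_sub, Submodule.Quotient.mk_smul, eQ]

/-- The flags containing the base vertex of the toroid. -/
def OnBaseVertex (Φ : TFlag n Λ) : Prop :=
  Φ.2.2 = Submodule.Quotient.mk (signOffset Φ.2.1)

theorem onBaseVertex_baseFlag : OnBaseVertex (baseFlag n Λ) := by
  simp [OnBaseVertex, baseFlag, signOffset_one]

theorem closure_adjacent_swaps_eq_top :
    Submonoid.closure
      (Set.range fun j : Fin (n - 1) => swap (⟨j, by omega⟩ : Fin n) ⟨j + 1, by omega⟩) = ⊤ := by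
  cases n with
  | zero => exact Subsingleton.elim _ _
  | succ m => exact Perm.mclosure_swap_castSucc_succ m

section Generators

variable (hn : 2 ≤ n)

theorem rGen_of_le {i : ℕ} (h1 : 1 ≤ i) (h2 : i ≤ n - 1) (Φ : TFlag n Λ) :
    rGen Λ hn i Φ = (swap (⟨i - 1, by omega⟩ : Fin n) ⟨i, by omega⟩ * Φ.1, Φ.2.1, Φ.2.2) := by
  simp [rGen, show i ≠ 0 by omega, h1, h2]

theorem rGen_self (Φ : TFlag n Λ) :
    rGen Λ hn n Φ =
      (Φ.1, flipAt Φ.2.1 (Φ.1 ⟨n - 1, by omega⟩),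
        Φ.2.2 - (Φ.2.1 (Φ.1 ⟨n - 1, by omega⟩) : ℤ) • eQ Λ (Φ.1 ⟨n - 1, by omega⟩)) := by
  simp [rGen, show n ≠ 0 by omega, show ¬(1 ≤ n ∧ n ≤ n - 1) by omega]

theorem OnBaseVertex.rGen {Φ : TFlag n Λ} (hΦ : OnBaseVertex Φ) {i : ℕ} (h1 : 1 ≤ i)
    (h2 : i ≤ n) : OnBaseVertex (rGen Λ hn i Φ) := by
  rcases h2.lt_or_eq with hi | rfl
  · rw [rGen_of_le hn h1 (by omega)]
    exact hΦ
  · rw [rGen_self hn, OnBaseVertex, mk_signOffset_flipAt, ← hΦ]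

/-- The orbit of the base flag under `⟨r₁, …, rₙ⟩`; a word is applied from its last letter. -/
def Reachable (Φ : TFlag n Λ) : Prop :=
  ∃ L : List ℕ, (∀ i ∈ L, 1 ≤ i ∧ i ≤ n) ∧ Φ = L.foldr (fun i Ψ => rGen Λ hn i Ψ) (baseFlag n Λ)

theorem reachable_baseFlag : Reachable hn (baseFlag n Λ) :=
  ⟨[], by simp, rfl⟩

theorem Reachable.rGen {Φ : TFlag n Λ} (hΦ : Reachable hn Φ) {i : ℕ} (h1 : 1 ≤ i)
    (h2 : i ≤ n) : Reachable hn (rGen Λ hn i Φ) := by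
  obtain ⟨L, hL, rfl⟩ := hΦ
  refine ⟨i :: L, ?_, rfl⟩
  simp only [List.mem_cons, forall_eq_or_imp]
  exact ⟨⟨h1, h2⟩, hL⟩

theorem Reachable.onBaseVertex {Φ : TFlag n Λ} (hΦ : Reachable hn Φ) : OnBaseVertex Φ := by
  obtain ⟨L, hL, rfl⟩ := hΦ
  induction L with
  | nil => exact onBaseVertex_baseFlag
  | cons i L ih =>
    simp only [List.mem_cons, forall_eq_or_imp] at hL
    exact (ih hL.2).rGen hn hL.1.1 hL.1.2

theorem Reachable.perm_mul {Φ : TFlag n Λ} (hΦ : Reachable hn Φ) (σ : Perm (Fin n)) :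
    Reachable hn (σ * Φ.1, Φ.2.1, Φ.2.2) := by
  have hσ := closure_adjacent_swaps_eq_top ▸ Submonoid.mem_top σ
  induction hσ using Submonoid.closure_induction_left with
  | one => simpa using hΦ
  | mul_left _ hτ τ _ ih =>
    obtain ⟨j, rfl⟩ := hτ
    have h := ih.rGen hn (i := j + 1) (by omega) (by omega)
    rw [rGen_of_le hn (by omega) (by omega)] at h
    simpa [mul_assoc] using h

def signsOf (s : Finset (Fin n)) : Fin n → ℤˣ := fun i => if i ∈ s then -1 else 1

theorem reachable_signsOf (s : Finset (Fin n)) (σ : Perm (Fin n)) :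
    Reachable hn ((σ, signsOf s, Submodule.Quotient.mk (signOffset (signsOf s))) : TFlag n Λ) := by
  induction s using Finset.induction_on generalizing σ with
  | empty =>
    have h := (reachable_baseFlag hn (Λ := Λ)).perm_mul hn σ
    have hx : signsOf (∅ : Finset (Fin n)) = fun _ => 1 := by funext i; simp [signsOf]
    simpa [baseFlag, hx, signOffset_one] using h
  | @insert p s hp ih =>
    -- move `p` to the last position, then `rₙ` flips its sign
    set τ := swap (⟨n - 1, by omega⟩ : Fin n) p
    have hflip : flipAt (signsOf s) p = signsOf (insert p s) := by
      funext i
      by_cases h : i = p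
      · subst h; simp [flipAt, signsOf, hp]
      · simp [flipAt, signsOf, h]
    have h := (ih τ).rGen hn (i := n) (by omega) le_rfl
    rw [rGen_self hn] at h
    simp only [τ, swap_apply_left] at h
    rw [← mk_signOffset_flipAt, hflip] at h
    simpa [τ, mul_assoc] using h.perm_mul hn (σ * τ)

theorem OnBaseVertex.reachable {Φ : TFlag n Λ} (hΦ : OnBaseVertex Φ) : Reachable hn Φ := by
  have hx : Φ.2.1 = signsOf {i | Φ.2.1 i = -1} := by
    funext i
    rcases Int.units_eq_one_or (Φ.2.1 i) with h | h <;> simp [signsOf, h]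
  obtain ⟨σ, x, t⟩ := Φ
  simp only [OnBaseVertex] at hΦ hx
  subst hΦ
  rw [hx]
  exact reachable_signsOf hn _ σ

end Generators

end CubicToroid

open CubicToroid in
theorem orbit_of_base_vertex_iff_general (n a : ℕ) (hn : 2 ≤ n)
    (Φ : TFlag n (dvdLattice n a)) :
    (∃ L : List ℕ, (∀ i ∈ L, 1 ≤ i ∧ i ≤ n) ∧
        Φ = L.foldr (fun i Ψ => rGen (dvdLattice n a) hn i Ψ)
          ((1 : Equiv.Perm (Fin n)), fun _ => (1 : ℤˣ),
            (0 : (Fin n → ℤ) ⧸ dvdLattice n a))) ↔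
      Φ.2.2 = Submodule.Quotient.mk (fun i => if Φ.2.1 i = 1 then 0 else -1) :=
  show Reachable hn Φ ↔ OnBaseVertex Φ from ⟨(·.onBaseVertex hn), (·.reachable hn)⟩

/-- **Lemma 5.1** (combinatorial form): a flag `Φ = (σ, x, t)` of the toroid
`{4,3^{n−2},4}/aℤⁿ` (with `a` even, `a ≥ 3`) lies in the orbit of the base flag
`((1), 𝟙, 0)` under the subgroup generated by `r₁, …, rₙ` — that is, `Φ` contains the
base vertex — if and only if each `tᵢ ∈ {0, −1}` with `tᵢ = −1` exactly when `xᵢ = −1`,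
i.e. `t` is the class of the vector `i ↦ (if xᵢ = 1 then 0 else −1)`. -/
theorem orbit_of_base_vertex_iff (n a : ℕ) (hn : 2 ≤ n) (ha : Even a) (ha3 : 3 ≤ a)
    (Φ : TFlag n (dvdLattice n a)) :
    (∃ L : List ℕ, (∀ i ∈ L, 1 ≤ i ∧ i ≤ n) ∧
        Φ = L.foldr (fun i Ψ => rGen (dvdLattice n a) hn i Ψ)
          ((1 : Equiv.Perm (Fin n)), fun _ => (1 : ℤˣ),
            (0 : (Fin n → ℤ) ⧸ dvdLattice n a))) ↔
      Φ.2.2 = Submodule.Quotient.mk (fun i => if Φ.2.1 i = 1 then 0 else -1) :=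
  orbit_of_base_vertex_iff_general n a hn Φ
end

section
/- Let a ≥ 6n+1 and Λ = aℤⁿ. Let v₀ = (1,2,…,n) and for σ ∈ Sₙ, x ∈ {±1}ⁿ set v(σ,x) = x·(σv₀) ∈ ℤⁿ/Λ. Then for any fixed i with 1 ≤ |i| ≤ 3, the map (σ, x) ↦ i·v(σ, x) from Sₙ × {±1}ⁿ to ℤⁿ/Λ is injective. Consequently, if Φ₁ = (σ₁, x₁, t) and Φ₂ = (σ₂, x₂, t) are distinct flags with the same facet t, then ηⁱΦ₁ and ηⁱΦ₂ have different facets. -/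
/-- The vector `v(σ, x) = x·(σv₀)` where `v₀ = (1, 2, …, n)`: the entries of `v₀` are
permuted by `σ` and then the signs are changed according to `x`. -/
def vVec {n : ℕ} (σ : Equiv.Perm (Fin n)) (x : Fin n → ℤˣ) : Fin n → ℤ :=
  fun k => ((x k : ℤ)) * (((σ⁻¹ k : Fin n) : ℕ) + 1)

/-- The permutation `η` of the flag set given by `η(σ, x, t) = (σ, x, t + v(σ, x))`. -/
noncomputable def etaPerm {n : ℕ} (Λ : Submodule ℤ (Fin n → ℤ)) : Equiv.Perm (TFlag n Λ) where
  toFun Φ := (Φ.1, Φ.2.1, Φ.2.2 + Submodule.Quotient.mk (vVec Φ.1 Φ.2.1))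
  invFun Φ := (Φ.1, Φ.2.1, Φ.2.2 - Submodule.Quotient.mk (vVec Φ.1 Φ.2.1))
  left_inv Φ := by obtain ⟨σ, x, t⟩ := Φ; simp
  right_inv Φ := by obtain ⟨σ, x, t⟩ := Φ; simp

lemma etaPerm_zpow_apply {n : ℕ} (Λ : Submodule ℤ (Fin n → ℤ)) (i : ℤ)
    (σ : Equiv.Perm (Fin n)) (x : Fin n → ℤˣ) (t : (Fin n → ℤ) ⧸ Λ) :
    (etaPerm Λ ^ i) (σ, x, t) = (σ, x, t + i • Submodule.Quotient.mk (vVec σ x)) := by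
  induction i using Int.induction_on generalizing t with
  | zero => simp
  | succ k ih =>
    rw [zpow_add_one, Equiv.Perm.mul_apply]
    change (etaPerm Λ ^ (k : ℤ)) (σ, x, t + Submodule.Quotient.mk (vVec σ x)) = _
    rw [ih, add_smul, one_smul, add_assoc, add_comm (Submodule.Quotient.mk _)]
  | pred k ih =>
    rw [zpow_sub_one, Equiv.Perm.mul_apply]
    change (etaPerm Λ ^ (-(k : ℤ))) (σ, x, t - Submodule.Quotient.mk (vVec σ x)) = _
    rw [ih, sub_smul, one_smul, sub_add_eq_add_sub, add_sub_assoc]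

lemma abs_vVec_apply {n : ℕ} (σ : Equiv.Perm (Fin n)) (x : Fin n → ℤˣ) (k : Fin n) :
    |vVec σ x k| = ((σ⁻¹ k : ℕ) : ℤ) + 1 := by
  rw [vVec, abs_mul, Int.abs_eq_natAbs (x k : ℤ), Int.units_natAbs, Nat.cast_one, one_mul]
  exact abs_of_pos (by positivity)

lemma abs_vVec_apply_le {n : ℕ} (σ : Equiv.Perm (Fin n)) (x : Fin n → ℤˣ) (k : Fin n) :
    |vVec σ x k| ≤ n := by
  rw [abs_vVec_apply]
  exact_mod_cast (σ⁻¹ k).isLt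

lemma vVec_injective {n : ℕ} : Function.Injective (fun p : Equiv.Perm (Fin n) × (Fin n → ℤˣ) =>
    vVec p.1 p.2) := by
  rintro ⟨σ₁, x₁⟩ ⟨σ₂, x₂⟩ h
  have hk (k : Fin n) : vVec σ₁ x₁ k = vVec σ₂ x₂ k := congrFun h k
  have hσ : σ₁⁻¹ = σ₂⁻¹ := by
    ext k
    simpa [abs_vVec_apply] using congrArg abs (hk k)
  rw [inv_inj] at hσ
  subst hσ
  have hx : x₁ = x₂ := by
    ext k : 1
    refine Units.ext (mul_right_cancel₀ ?_ (hk k))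
    positivity
  rw [hx]

lemma eq_of_mk_eq_of_abs_sub_lt {n a : ℕ} {u w : Fin n → ℤ}
    (h : (Submodule.Quotient.mk u : (Fin n → ℤ) ⧸ dvdLattice n a) = Submodule.Quotient.mk w)
    (hlt : ∀ k, |u k - w k| < a) : u = w := by
  rw [Submodule.Quotient.eq] at h
  funext k
  exact sub_eq_zero.mp (Int.eq_zero_of_abs_lt_dvd (h k) (hlt k))

lemma smul_mk_vVec_injective {n a : ℕ} {i : ℤ} (hi0 : i ≠ 0) (ha : 2 * |i| * n < a) :
    Function.Injective (fun p : Equiv.Perm (Fin n) × (Fin n → ℤˣ) =>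
      (i • Submodule.Quotient.mk (vVec p.1 p.2) : (Fin n → ℤ) ⧸ dvdLattice n a)) := by
  rintro ⟨σ₁, x₁⟩ ⟨σ₂, x₂⟩ h
  simp only [← Submodule.Quotient.mk_smul] at h
  have hlt (k : Fin n) : |(i • vVec σ₁ x₁) k - (i • vVec σ₂ x₂) k| < a := by
    have h₁ := abs_vVec_apply_le σ₁ x₁ k
    have h₂ := abs_vVec_apply_le σ₂ x₂ k
    calc |(i • vVec σ₁ x₁) k - (i • vVec σ₂ x₂) k|
        ≤ |i| * |vVec σ₁ x₁ k| + |i| * |vVec σ₂ x₂ k| := by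
          simp only [Pi.smul_apply, smul_eq_mul, ← abs_mul]
          exact abs_sub _ _
      _ ≤ |i| * n + |i| * n := by gcongr
      _ < a := by linarith
  exact vVec_injective (smul_right_injective _ hi0 (eq_of_mk_eq_of_abs_sub_lt h hlt))

theorem eta_separates_flags_of_a_facet_general (n a : ℕ) (ha : 6 * n + 1 ≤ a)
    (i : ℤ) (hi1 : 1 ≤ |i|) (hi3 : |i| ≤ 3) :
    Function.Injective (fun p : Equiv.Perm (Fin n) × (Fin n → ℤˣ) =>
      (i • Submodule.Quotient.mk (vVec p.1 p.2) :
        (Fin n → ℤ) ⧸ dvdLattice n a)) ∧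
    ∀ (σ₁ σ₂ : Equiv.Perm (Fin n)) (x₁ x₂ : Fin n → ℤˣ)
      (t : (Fin n → ℤ) ⧸ dvdLattice n a), (σ₁, x₁) ≠ (σ₂, x₂) →
        ((etaPerm (dvdLattice n a) ^ i) (σ₁, x₁, t)).2.2 ≠
          ((etaPerm (dvdLattice n a) ^ i) (σ₂, x₂, t)).2.2 := by
  have hbound : 2 * |i| * n < a := by
    have : (6 * n + 1 : ℤ) ≤ a := by exact_mod_cast ha
    nlinarith
  have hinj := smul_mk_vVec_injective (abs_pos.mp (one_pos.trans_le hi1)) hbound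
  refine ⟨hinj, fun σ₁ σ₂ x₁ x₂ t hne heq => hne (hinj ?_)⟩
  simpa only [etaPerm_zpow_apply, add_right_inj] using heq

/-- For `Λ = aℤⁿ` with `a ≥ 6n+1` and a fixed integer `i` with `1 ≤ |i| ≤ 3`, the map
`(σ, x) ↦ i·v(σ, x)` into `ℤⁿ/Λ` is injective. Consequently, if `Φ₁ = (σ₁, x₁, t)` and
`Φ₂ = (σ₂, x₂, t)` are distinct flags with the same facet `t`, then `ηⁱΦ₁` and `ηⁱΦ₂`
have different facets. -/
theorem eta_separates_flags_of_a_facet (n a : ℕ) (hn : 2 ≤ n) (ha : 6 * n + 1 ≤ a)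
    (i : ℤ) (hi1 : 1 ≤ |i|) (hi3 : |i| ≤ 3) :
    Function.Injective (fun p : Equiv.Perm (Fin n) × (Fin n → ℤˣ) =>
      (i • Submodule.Quotient.mk (vVec p.1 p.2) :
        (Fin n → ℤ) ⧸ dvdLattice n a)) ∧
    ∀ (σ₁ σ₂ : Equiv.Perm (Fin n)) (x₁ x₂ : Fin n → ℤˣ)
      (t : (Fin n → ℤ) ⧸ dvdLattice n a), (σ₁, x₁) ≠ (σ₂, x₂) →
        ((etaPerm (dvdLattice n a) ^ i) (σ₁, x₁, t)).2.2 ≠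
          ((etaPerm (dvdLattice n a) ^ i) (σ₂, x₂, t)).2.2 :=
  eta_separates_flags_of_a_facet_general n a ha i hi1 hi3
end

section
/- Let a ≥ 6n+1, Λ = aℤⁿ, v₀ = (1,2,…,n), and v(σ,x) = x·(σv₀). For i, j ∈ {±1, ±2, ±3} with i ≠ ±j, and for any σ₁, σ₂ ∈ Sₙ, x₁, x₂ ∈ {±1}ⁿ, we have i·v(σ₁, x₁) ≠ j·v(σ₂, x₂) in ℤⁿ/aℤⁿ. -/
section vVec

variable {n : ℕ} (σ : Equiv.Perm (Fin n)) (x : Fin n → ℤˣ)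

theorem abs_vVec (k : Fin n) : |vVec σ x k| = ((σ⁻¹ k : Fin n) : ℕ) + 1 := by
  rw [vVec, abs_mul, Int.isUnit_iff_abs_eq.mp (x k).isUnit, one_mul]
  exact abs_of_nonneg (by positivity)

theorem one_le_abs_vVec (k : Fin n) : 1 ≤ |vVec σ x k| := by
  rw [abs_vVec]
  omega

theorem abs_vVec_le (k : Fin n) : |vVec σ x k| ≤ n := by
  rw [abs_vVec]
  have := (σ⁻¹ k).isLt
  omega

theorem abs_vVec_apply_zero [NeZero n] : |vVec σ x (σ 0)| = 1 := by
  simp [abs_vVec]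

end vVec

theorem smul_mk_eq_smul_mk_iff {n a : ℕ} (i j : ℤ) (v w : Fin n → ℤ) :
    (i • Submodule.Quotient.mk v : (Fin n → ℤ) ⧸ dvdLattice n a) = j • Submodule.Quotient.mk w ↔
      ∀ k, (a : ℤ) ∣ i * v k - j * w k := by
  rw [← Submodule.Quotient.mk_smul, ← Submodule.Quotient.mk_smul, Submodule.Quotient.eq]
  rfl

theorem smul_vVec_eq_of_smul_mk_eq {n a : ℕ} {i j c : ℤ} (hi : |i| ≤ c) (hj : |j| ≤ c)
    (ha : 2 * c * n < a) {σ₁ σ₂ : Equiv.Perm (Fin n)} {x₁ x₂ : Fin n → ℤˣ}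
    (h : (i • Submodule.Quotient.mk (vVec σ₁ x₁) : (Fin n → ℤ) ⧸ dvdLattice n a) =
      j • Submodule.Quotient.mk (vVec σ₂ x₂)) :
    i • vVec σ₁ x₁ = j • vVec σ₂ x₂ := by
  funext k
  have hdvd := (smul_mk_eq_smul_mk_iff i j _ _).mp h k
  have bound₁ : |i * vVec σ₁ x₁ k| ≤ c * n := by
    rw [abs_mul]
    exact mul_le_mul hi (abs_vVec_le σ₁ x₁ k) (abs_nonneg _) ((abs_nonneg i).trans hi)
  have bound₂ : |j * vVec σ₂ x₂ k| ≤ c * n := by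
    rw [abs_mul]
    exact mul_le_mul hj (abs_vVec_le σ₂ x₂ k) (abs_nonneg _) ((abs_nonneg j).trans hj)
  have hlt : |i * vVec σ₁ x₁ k - j * vVec σ₂ x₂ k| < a :=
    (abs_sub _ _).trans_lt (by linarith)
  exact sub_eq_zero.mp (Int.eq_zero_of_abs_lt_dvd hdvd hlt)

theorem abs_le_abs_of_smul_vVec_eq {n : ℕ} [NeZero n] {i j : ℤ}
    {σ₁ σ₂ : Equiv.Perm (Fin n)} {x₁ x₂ : Fin n → ℤˣ}
    (h : i • vVec σ₁ x₁ = j • vVec σ₂ x₂) : |j| ≤ |i| := by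
  have hk := congrArg (fun v => |v (σ₁ 0)|) h
  simp only [Pi.smul_apply, smul_eq_mul, abs_mul, abs_vVec_apply_zero, mul_one] at hk
  rw [hk]
  exact le_mul_of_one_le_right (abs_nonneg j) (one_le_abs_vVec σ₂ x₂ _)

theorem eta_powers_disjoint_general (n a : ℕ) (hn : 2 ≤ n) (ha : 6 * n + 1 ≤ a)
    (i j : ℤ) (hi3 : |i| ≤ 3) (hj3 : |j| ≤ 3)
    (hij : i ≠ j) (hij' : i ≠ -j)
    (σ₁ σ₂ : Equiv.Perm (Fin n)) (x₁ x₂ : Fin n → ℤˣ) :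
    (i • Submodule.Quotient.mk (vVec σ₁ x₁) : (Fin n → ℤ) ⧸ dvdLattice n a) ≠
      j • Submodule.Quotient.mk (vVec σ₂ x₂) := by
  intro h
  have : NeZero n := ⟨by omega⟩
  have ha' : 2 * 3 * (n : ℤ) < a := by omega
  have heq := smul_vVec_eq_of_smul_mk_eq hi3 hj3 ha' h
  have habs : |i| = |j| :=
    le_antisymm (abs_le_abs_of_smul_vVec_eq heq.symm) (abs_le_abs_of_smul_vVec_eq heq)
  rcases abs_eq_abs.mp habs with rfl | rfl
  exacts [hij rfl, hij' rfl]

/-- For `Λ = aℤⁿ` with `a ≥ 6n+1` and `i, j ∈ {±1, ±2, ±3}` with `i ≠ ±j`, the facets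
`i·v(σ₁, x₁)` and `j·v(σ₂, x₂)` are always distinct in `ℤⁿ/aℤⁿ`. -/
theorem eta_powers_disjoint (n a : ℕ) (hn : 2 ≤ n) (ha : 6 * n + 1 ≤ a)
    (i j : ℤ) (hi1 : 1 ≤ |i|) (hi3 : |i| ≤ 3) (hj1 : 1 ≤ |j|) (hj3 : |j| ≤ 3)
    (hij : i ≠ j) (hij' : i ≠ -j)
    (σ₁ σ₂ : Equiv.Perm (Fin n)) (x₁ x₂ : Fin n → ℤˣ) :
    (i • Submodule.Quotient.mk (vVec σ₁ x₁) : (Fin n → ℤ) ⧸ dvdLattice n a) ≠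
      j • Submodule.Quotient.mk (vVec σ₂ x₂) :=
  eta_powers_disjoint_general n a hn ha i j hi3 hj3 hij hij' σ₁ σ₂ x₁ x₂
end
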